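/- arXiv:1802.09001 — 5 statements merged into one kernel-verified Lean document; each statement's English description precedes it below -/
import Mathlib

section
/- Let o be a partial order on a finite candidate set C of size m, let α = (α_m ≥ α_{m-1} ≥ ... ≥ α_1) be a scoring vector (position j from the top receives score α_{m+1-j}), and let c ∈ C. The maximum over all linear extensions v of o of the score of c in v equals α evaluated at the position |{c' ∈ C : c' ≻_o c}| + 1. -/
/-- For a strict partial order `o` on a finite set `C` of `m` candidates and a
monotone scoring vector, encoded as `α : ℕ → ℤ` giving the score of each 0-based
position from the top (`Antitone α` corresponds to `α_m ≥ ⋯ ≥ α_1`), the maximum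
score of `c` over all linear extensions `v` of `o` is `α` evaluated at the
position `|{c' : c' ≻_o c}| + 1` (0-based: index `|{c' : c' ≻_o c}|`). -/
theorem stmt2 {C : Type*} [Fintype C] (o : C → C → Prop)
    (hirr : ∀ a : C, ¬ o a a) (htrans : ∀ a b c : C, o a b → o b c → o a c)
    (α : ℕ → ℤ) (hα : Antitone α) (c : C) :
    IsGreatest {s : ℤ | ∃ v : C ≃ Fin (Fintype.card C),
        (∀ a b : C, o a b → v a < v b) ∧ s = α (v c : ℕ)}
      (α (Nat.card {c' : C // o c' c})) := by
  classical
  constructor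
  · -- membership: build a linear extension placing `c` right below its forced-above set
    set T : C → Prop := fun x => x = c ∨ o x c with hT
    set o' : C → C → Prop := fun a b => o a b ∨ (T a ∧ ¬ T b) with ho'
    have hirr' : ∀ a, ¬ o' a a := by
      rintro a (h | ⟨h1, h2⟩)
      · exact hirr a h
      · exact h2 h1
    have hTtrans : ∀ a b, o a b → T b → T a := by
      rintro a b hab (rfl | hb)
      · exact Or.inr hab
      · exact Or.inr (htrans _ _ _ hab hb)
    have htrans' : ∀ a b d, o' a b → o' b d → o' a d := by
      rintro a b d (hab | ⟨ha, hb⟩) (hbd | ⟨hb', hd⟩)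
      · exact Or.inl (htrans _ _ _ hab hbd)
      · exact Or.inr ⟨hTtrans _ _ hab hb', hd⟩
      · exact Or.inr ⟨ha, fun hd => hb (hTtrans _ _ hbd hd)⟩
      · exact (hb hb').elim
    have hasymm' : ∀ a b, o' a b → ¬ o' b a := fun a b h h' =>
      hirr' a (htrans' _ _ _ h h')
    letI P : PartialOrder C :=
      { le := fun a b => a = b ∨ o' a b
        le_refl := fun a => Or.inl rfl
        le_trans := by
          rintro a b d (rfl | h) (rfl | h')
          · exact Or.inl rfl
          · exact Or.inr h'
          · exact Or.inr h
          · exact Or.inr (htrans' _ _ _ h h')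
        le_antisymm := by
          rintro a b (rfl | h) (h' | h'')
          · rfl
          · rfl
          · exact h'.symm
          · exact (hasymm' _ _ h h'').elim }
    letI : Fintype (LinearExtension C) := inferInstanceAs (Fintype C)
    let e : Fin (Fintype.card C) ≃o LinearExtension C :=
      monoEquivOfFin (LinearExtension C) rfl
    let g : C ≃ LinearExtension C := Equiv.refl C
    let v : C ≃ Fin (Fintype.card C) := g.trans e.symm.toEquiv
    have hv : ∀ a b : C, o' a b → v a < v b := by
      intro a b h
      have hle : toLinearExtension (α := C) a ≤ toLinearExtension b :=
        toLinearExtension.monotone (Or.inr h)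
      have hne : toLinearExtension (α := C) a ≠ toLinearExtension b := by
        intro heq
        have : a = b := heq
        exact hirr' a (this ▸ h)
      have hlt : toLinearExtension (α := C) a < toLinearExtension b :=
        lt_of_le_of_ne hle hne
      exact e.symm.strictMono hlt
    refine ⟨v, fun a b hab => hv a b (Or.inl hab), ?_⟩
    have key : ∀ x : C, v x < v c ↔ o x c := by
      intro x
      constructor
      · intro hx
        have hxc : x ≠ c := by
          rintro rfl; exact lt_irrefl _ hx
        by_contra hox
        have hnT : ¬ T x := by
          rintro (rfl | h)
          · exact hxc rfl
          · exact hox h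
        have : o' c x := Or.inr ⟨Or.inl rfl, hnT⟩
        exact absurd (hv _ _ this) (not_lt.mpr hx.le)
      · intro hox
        exact hv _ _ (Or.inl hox)
    have hcard : Nat.card {c' : C // o c' c} = (v c : ℕ) := by
      rw [Nat.card_eq_fintype_card]
      have h1 : Fintype.card {c' : C // o c' c} =
          Fintype.card {i : Fin (Fintype.card C) // i < v c} := by
        apply Fintype.card_congr
        exact (Equiv.subtypeEquiv v (fun x => (key x).symm))
      rw [h1]
      exact Fintype.card_fin_lt_of_le (le_of_lt (v c).isLt)
    rw [hcard]
  · -- upper bound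
    rintro s ⟨v, hv, rfl⟩
    apply hα
    rw [Nat.card_eq_fintype_card]
    have : Fintype.card {c' : C // o c' c} ≤ Fintype.card (Fin ((v c : ℕ))) := by
      apply Fintype.card_le_of_injective
        (fun x => ⟨(v x.1 : ℕ), hv x.1 c x.2⟩)
      intro x y hxy
      have h2 : ((v x.1 : ℕ)) = ((v y.1 : ℕ)) := by
        simpa using congrArg Fin.val hxy
      exact Subtype.ext (v.injective (Fin.ext h2))
    simpa using this
end

section
/- Let o be a partitioned preference on finite C with ordered partition A_1,...,A_q, let c ∈ A_l, and let v be a linear extension of o in which c is not at position p = |A_1|+...+|A_{l-1}|+1 (the topmost position of its block). Let c' be the candidate at position p in v. Then c and c' are incomparable under o, and the ranking v' obtained from v by swapping c and c' is also a linear extension of o. -/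
private lemma card_filter_lt_pos {C : Type*} [Fintype C] [DecidableEq C]
    (v : C ≃ Fin (Fintype.card C)) (k : Fin (Fintype.card C)) :
    (Finset.univ.filter fun x => (v x : ℕ) < (k : ℕ)).card = (k : ℕ) := by
  have h1 := Finset.card_equiv (s := Finset.univ.filter fun x => (v x : ℕ) < (k : ℕ))
    (t := Finset.univ.filter fun j : Fin (Fintype.card C) => (j : ℕ) < (k : ℕ)) v (by simp)
  have h2 : (Finset.univ.filter fun j : Fin (Fintype.card C) => (j : ℕ) < (k : ℕ))
      = Finset.Iio k := by
    ext j
    simp only [Finset.mem_filter, Finset.mem_Iio, Finset.mem_univ, true_and, Fin.lt_def]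
  rw [h1, h2, Fin.card_Iio]

/-- Partitioned preference via block indices `blk`; `v` a linear extension
(ranking `C ≃ Fin m`, 0-based from top). If `c` is not at the topmost position
`p = |{a : blk a < blk c}|` of its block and `c'` is the candidate at position
`p` in `v`, then `c` and `c'` are incomparable under the partitioned preference,
and swapping `c` and `c'` in `v` again yields a linear extension. -/
theorem stmt3 {C : Type*} [Fintype C] [DecidableEq C] (blk : C → ℕ) (c : C)
    (v : C ≃ Fin (Fintype.card C)) (hv : ∀ a b : C, blk a < blk b → v a < v b)
    (c' : C) (hc' : (v c' : ℕ) = Nat.card {a : C // blk a < blk c})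
    (hne : (v c : ℕ) ≠ Nat.card {a : C // blk a < blk c}) :
    (¬ blk c < blk c' ∧ ¬ blk c' < blk c) ∧
      (∀ a b : C, blk a < blk b →
        ((Equiv.swap c c').trans v) a < ((Equiv.swap c c').trans v) b) := by
  classical
  set p : ℕ := Nat.card {a : C // blk a < blk c} with hp
  set S : Finset C := Finset.univ.filter (fun a => blk a < blk c) with hSdef
  have hpS : p = S.card := by
    rw [hp, Nat.card_eq_fintype_card, Fintype.card_subtype]
  -- p ≤ v c, hence p < v c
  have hple : p ≤ (v c : ℕ) := by
    have hsub : S ⊆ Finset.univ.filter fun x => (v x : ℕ) < ((v c) : ℕ) := by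
      intro a ha
      simp only [hSdef, Finset.mem_filter, Finset.mem_univ, true_and] at ha ⊢
      exact_mod_cast hv a c ha
    calc p = S.card := hpS
      _ ≤ _ := Finset.card_le_card hsub
      _ = (v c : ℕ) := card_filter_lt_pos v (v c)
  have hplt : p < (v c : ℕ) := lt_of_le_of_ne hple (Ne.symm hne)
  -- ¬ blk c < blk c'
  have h1 : ¬ blk c < blk c' := by
    intro h
    have := hv c c' h
    rw [Fin.lt_def, hc'] at this
    omega
  -- ¬ blk c' < blk c
  have h2 : ¬ blk c' < blk c := by
    intro h
    set F : Finset C := Finset.univ.filter fun x => (v x : ℕ) < ((v c') : ℕ) with hFdef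
    have hFcard : F.card = p := by rw [hFdef, card_filter_lt_pos v (v c'), hc']
    have hFS : F ⊆ S := by
      intro x hx
      simp only [hFdef, Finset.mem_filter, Finset.mem_univ, true_and] at hx
      simp only [hSdef, Finset.mem_filter, Finset.mem_univ, true_and]
      by_contra hxc
      have hlt : blk c' < blk x := lt_of_lt_of_le h (not_lt.mp hxc)
      have := hv c' x hlt
      rw [Fin.lt_def] at this
      omega
    have hc'F : c' ∉ F := by
      simp [hFdef]
    have hc'S : c' ∈ S := by
      simp only [hSdef, Finset.mem_filter, Finset.mem_univ, true_and]; exact h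
    have hins : insert c' F ⊆ S := Finset.insert_subset hc'S hFS
    have : p + 1 ≤ S.card := by
      calc p + 1 = (insert c' F).card := by rw [Finset.card_insert_of_notMem hc'F, hFcard]
        _ ≤ S.card := Finset.card_le_card hins
    omega
  refine ⟨⟨h1, h2⟩, ?_⟩
  have hbeq : blk c' = blk c := le_antisymm (not_lt.mp h1) (not_lt.mp h2)
  have hswap : ∀ x : C, blk ((Equiv.swap c c') x) = blk x := by
    intro x
    rcases eq_or_ne x c with rfl | hxc
    · rw [Equiv.swap_apply_left, hbeq]
    rcases eq_or_ne x c' with rfl | hxc'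
    · rw [Equiv.swap_apply_right, hbeq]
    · rw [Equiv.swap_apply_of_ne_of_ne hxc hxc']
  intro a b hab
  simp only [Equiv.trans_apply]
  exact hv _ _ (by rw [hswap, hswap]; exact hab)
end

section
/- Let O = (o_1,...,o_n) be a profile of partitioned preferences on a finite candidate set C, r a positional scoring rule, and c ∈ C a distinguished candidate. Let O^c be the profile obtained from O by additionally requiring, in each vote, that c precedes every candidate not already forced above c. Then c is a possible co-winner with respect to O (i.e., there is a profile of linear extensions of O in which c achieves the maximum total score) if and only if c is a possible co-winner with respect to O^c. -/
/-- For a profile `O = (o_1,…,o_n)` of partitioned preferences (vote `i` given by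
block indices `B i`), a positional scoring rule (`α : ℕ → ℤ` score by 0-based
position from the top, `Antitone α`) and a distinguished candidate `c`:
`c` is a possible co-winner with respect to `O` iff `c` is a possible co-winner
with respect to `O^c`, where `o_i^c = o_i ∪ {c ≻ c' : c' ⊁_{o_i} c}`. -/
theorem stmt5 {C : Type*} [Fintype C] [DecidableEq C] (n : ℕ)
    (B : Fin n → C → ℕ) (α : ℕ → ℤ) (hα : Antitone α) (c : C) :
    (∃ V : Fin n → (C ≃ Fin (Fintype.card C)),
        (∀ i (a b : C), B i a < B i b → V i a < V i b) ∧
        ∀ c' : C, (∑ i, α (V i c' : ℕ)) ≤ ∑ i, α (V i c : ℕ)) ↔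
    (∃ V : Fin n → (C ≃ Fin (Fintype.card C)),
        (∀ i (a b : C), (B i a < B i b ∨ (a = c ∧ b ≠ c ∧ ¬ B i b < B i c)) →
          V i a < V i b) ∧
        ∀ c' : C, (∑ i, α (V i c' : ℕ)) ≤ ∑ i, α (V i c : ℕ)) := by
  classical
  constructor
  · rintro ⟨V, hV, hscore⟩
    have key : ∀ i : Fin n, ∃ W : C ≃ Fin (Fintype.card C),
        (∀ a b : C, (B i a < B i b ∨ (a = c ∧ b ≠ c ∧ ¬ B i b < B i c)) → W a < W b) ∧
        (W c : ℕ) ≤ (V i c : ℕ) ∧ ∀ a : C, a ≠ c → (V i a : ℕ) ≤ (W a : ℕ) := by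
      intro i
      set p : ℕ := (V i c : ℕ) with hp
      have hVn : ∀ a b : C, B i a < B i b → (V i a : ℕ) < (V i b : ℕ) := by
        intro a b h; exact hV i a b h
      have hVeq : ∀ a b : C, (V i a : ℕ) = (V i b : ℕ) → a = b := by
        intro a b h; exact (V i).injective (Fin.ext h)
      set G : Finset C := Finset.univ.filter (fun a => B i a < B i c) with hG
      set q : ℕ := G.card with hq
      have hmem : ∀ a : C, a ∈ G ↔ B i a < B i c := by
        intro a; simp [hG]
      have horder : ∀ a ∈ G, ∀ b, b ∉ G → (V i a : ℕ) < (V i b : ℕ) := by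
        intro a ha b hb
        rw [hmem] at ha hb
        by_cases hbc : b = c
        · rw [hbc]; exact hVn a c ha
        · exact hVn a b (lt_of_lt_of_le ha (not_lt.mp hb))
      have himg : (G.image (fun a => V i a)).card = q :=
        Finset.card_image_of_injective _ (V i).injective
      have hiff : ∀ a : C, B i a < B i c ↔ (V i a : ℕ) < q := by
        intro a
        constructor
        · intro ha
          by_contra hlt
          push_neg at hlt
          have hsub : insert (V i a) (Finset.Iio (V i a)) ⊆ G.image (fun a => V i a) := by
            intro j hj
            rcases Finset.mem_insert.mp hj with h | h
            · subst h; exact Finset.mem_image.mpr ⟨a, (hmem a).mpr ha, rfl⟩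
            · have hj' : (j : ℕ) < (V i a : ℕ) := Fin.lt_def.mp (Finset.mem_Iio.mp h)
              set b := (V i).symm j with hb
              have hbj : V i b = j := (V i).apply_symm_apply j
              by_cases hbG : b ∈ G
              · exact Finset.mem_image.mpr ⟨b, hbG, hbj⟩
              · exfalso
                have h2 := horder a ((hmem a).mpr ha) b hbG
                rw [hbj] at h2
                omega
          have hcard := Finset.card_le_card hsub
          rw [himg, Finset.card_insert_of_notMem (by simp)] at hcard
          have hIio : (Finset.Iio (V i a)).card = (V i a : ℕ) := by
            simp [Fin.card_Iio]
          omega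
        · intro ha
          by_contra hB
          have hsub : G.image (fun a => V i a) ⊆ Finset.Iio (V i a) := by
            intro j hj
            rcases Finset.mem_image.mp hj with ⟨b, hb, rfl⟩
            exact Finset.mem_Iio.mpr
              (Fin.lt_def.mpr (horder b hb a (fun h => hB ((hmem a).mp h))))
          have hcard := Finset.card_le_card hsub
          have hIio : (Finset.Iio (V i a)).card = (V i a : ℕ) := by
            simp [Fin.card_Iio]
          omega
      have hqp : q ≤ p := by
        have h2 : ¬ ((V i c : ℕ) < q) := fun h => lt_irrefl _ ((hiff c).mpr h)
        omega
      have hpN : p < Fintype.card C := (V i c).isLt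
      have hqN : q < Fintype.card C := lt_of_le_of_lt hqp hpN
      set f : C → Fin (Fintype.card C) := fun a =>
        if B i a < B i c then V i a
        else if a = c then ⟨q, hqN⟩
        else if h : (V i a : ℕ) < p then ⟨(V i a : ℕ) + 1, by omega⟩
        else V i a with hf
      have hval : ∀ a : C,
          (B i a < B i c ∧ (f a : ℕ) = (V i a : ℕ) ∧ (V i a : ℕ) < q) ∨
          (a = c ∧ (f a : ℕ) = q ∧ (V i a : ℕ) = p) ∨
          (a ≠ c ∧ ¬ B i a < B i c ∧ q ≤ (V i a : ℕ) ∧ (V i a : ℕ) ≠ p ∧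
            (((f a : ℕ) = (V i a : ℕ) + 1 ∧ (V i a : ℕ) < p) ∨
             ((f a : ℕ) = (V i a : ℕ) ∧ p ≤ (V i a : ℕ)))) := by
        intro a
        by_cases h1 : B i a < B i c
        · exact Or.inl ⟨h1, by simp [hf, h1], (hiff a).mp h1⟩
        · by_cases h2 : a = c
          · refine Or.inr (Or.inl ⟨h2, by simp [hf, h1, h2], ?_⟩)
            subst h2; rfl
          · have h3 : q ≤ (V i a : ℕ) := by
              have := (hiff a); omega
            have h4 : (V i a : ℕ) ≠ p := fun h => h2 (hVeq a c h)
            refine Or.inr (Or.inr ⟨h2, h1, h3, h4, ?_⟩)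
            by_cases h5 : (V i a : ℕ) < p
            · exact Or.inl ⟨by simp [hf, h1, h2, h5], h5⟩
            · exact Or.inr ⟨by simp [hf, h1, h2, h5], not_lt.mp h5⟩
      have hinj : Function.Injective f := by
        intro a b hab
        have hab' : (f a : ℕ) = (f b : ℕ) := congrArg _ hab
        rcases hval a with ⟨ha1, ha2, ha3⟩ | ⟨ha1, ha2, ha3⟩ | ⟨ha1, ha2, ha3, ha4, ha5⟩ <;>
          rcases hval b with ⟨hb1, hb2, hb3⟩ | ⟨hb1, hb2, hb3⟩ | ⟨hb1, hb2, hb3, hb4, hb5⟩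
        · exact hVeq a b (by omega)
        · exfalso; omega
        · exfalso; rcases hb5 with ⟨e1, e2⟩ | ⟨e1, e2⟩ <;> omega
        · exfalso; omega
        · rw [ha1, hb1]
        · exfalso; rcases hb5 with ⟨e1, e2⟩ | ⟨e1, e2⟩ <;> omega
        · exfalso; rcases ha5 with ⟨e1, e2⟩ | ⟨e1, e2⟩ <;> omega
        · exfalso; rcases ha5 with ⟨e1, e2⟩ | ⟨e1, e2⟩ <;> omega
        · rcases ha5 with ⟨e1, e2⟩ | ⟨e1, e2⟩ <;> rcases hb5 with ⟨f1, f2⟩ | ⟨f1, f2⟩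
          · exact hVeq a b (by omega)
          · exfalso; omega
          · exfalso; omega
          · exact hVeq a b (by omega)
      have hord : ∀ a b : C, (B i a < B i b ∨ (a = c ∧ b ≠ c ∧ ¬ B i b < B i c)) →
          f a < f b := by
        intro a b h
        rw [Fin.lt_def]
        rcases hval a with ⟨ha1, ha2, ha3⟩ | ⟨ha1, ha2, ha3⟩ | ⟨ha1, ha2, ha3, ha4, ha5⟩ <;>
          rcases hval b with ⟨hb1, hb2, hb3⟩ | ⟨hb1, hb2, hb3⟩ | ⟨hb1, hb2, hb3, hb4, hb5⟩
        · rcases h with h | ⟨hc1, hc2, hc3⟩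
          · have := hVn a b h; omega
          · subst hc1; omega
        · omega
        · rcases h with h | ⟨hc1, hc2, hc3⟩
          · have := hVn a b h
            rcases hb5 with ⟨e1, e2⟩ | ⟨e1, e2⟩ <;> omega
          · subst hc1; omega
        · rcases h with h | ⟨hc1, hc2, hc3⟩
          · rw [ha1] at h; exfalso; omega
          · exact absurd hb1 hc3
        · rcases h with h | ⟨hc1, hc2, hc3⟩
          · subst ha1; subst hb1; exact absurd h (lt_irrefl _)
          · exact absurd hb1 hc2
        · rcases hb5 with ⟨e1, e2⟩ | ⟨e1, e2⟩ <;> omega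
        · rcases h with h | ⟨hc1, hc2, hc3⟩
          · have := hVn a b h; exfalso; omega
          · exact absurd hc1 ha1
        · rcases h with h | ⟨hc1, hc2, hc3⟩
          · subst hb1; exact absurd h ha2
          · exact absurd hb1 hc2
        · rcases h with h | ⟨hc1, hc2, hc3⟩
          · have := hVn a b h
            rcases ha5 with ⟨e1, e2⟩ | ⟨e1, e2⟩ <;> rcases hb5 with ⟨f1, f2⟩ | ⟨f1, f2⟩ <;> omega
          · exact absurd hc1 ha1
      refine ⟨Equiv.ofBijective f
        ((Fintype.bijective_iff_injective_and_card f).mpr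
          ⟨hinj, (Fintype.card_fin _).symm⟩), ?_, ?_, ?_⟩
      · intro a b h; exact hord a b h
      · show (f c : ℕ) ≤ p
        rcases hval c with ⟨h1, _⟩ | ⟨_, h2, _⟩ | ⟨h1, _⟩
        · exact absurd h1 (lt_irrefl _)
        · omega
        · exact absurd rfl h1
      · intro a ha
        show (V i a : ℕ) ≤ (f a : ℕ)
        rcases hval a with ⟨_, h2, _⟩ | ⟨h1, _⟩ | ⟨_, _, _, _, h5⟩
        · omega
        · exact absurd h1 ha
        · rcases h5 with ⟨e1, e2⟩ | ⟨e1, e2⟩ <;> omega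
    choose W hW1 hW2 hW3 using key
    refine ⟨W, hW1, fun c' => ?_⟩
    by_cases hc : c' = c
    · subst hc; exact le_refl _
    · calc (∑ i, α (W i c' : ℕ)) ≤ ∑ i, α (V i c' : ℕ) :=
            Finset.sum_le_sum fun i _ => hα (hW3 i c' hc)
        _ ≤ ∑ i, α (V i c : ℕ) := hscore c'
        _ ≤ ∑ i, α (W i c : ℕ) := Finset.sum_le_sum fun i _ => hα (hW2 i)
  · rintro ⟨V, hV, hs⟩
    exact ⟨V, fun i a b h => hV i a b (Or.inl h), hs⟩
end

section
/- Let O be a profile of partitioned preferences on C, r the k-approval rule, and c ∈ C. Then c is a possible co-winner if and only if there exists a profile V^c of linear extensions of O^c (where c is fixed at the top of its block in each vote) such that every candidate c' ≠ c receives score 0 in at least s^max(O,c') − s^max(O,c) of the votes o_i in which s^max(o_i,c') = 1. -/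
/-!
A vote is a block map `b : C → ℕ`; its linear extensions are the rankings `v` refining it.
Since `k`-approval scores are `0` or `1`, the number of votes in which `c'` falls short of its
maximum score is exactly `s^max(O,c') − score(c')`. Putting `c` on top of its block attains
`s^max(o_i,c)` in every vote and can only push every other candidate down, so it turns any
co-winning profile into one of `O^c`; conversely, in a profile of `O^c` the score of `c` is
`s^max(O,c)`, and the counting condition says that every `c'` scores at most that.
-/

open Finset

section Voting

variable {C : Type*} [Fintype C]

def approvalScore (k : ℕ) (v : C ≃ Fin (Fintype.card C)) (a : C) : ℤ :=
  if (v a : ℕ) < k then 1 else 0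

def IsLinearExtension (b : C → ℕ) (v : C ≃ Fin (Fintype.card C)) : Prop :=
  ∀ x y, b x < b y → v x < v y

/-- The vote `b` of `O^c`: moreover `c` precedes everything not strictly above it in `b`. -/
def IsLinearExtensionWithTop (b : C → ℕ) (c : C) (v : C ≃ Fin (Fintype.card C)) : Prop :=
  ∀ x y, (b x < b y ∨ (x = c ∧ y ≠ c ∧ ¬ b y < b c)) → v x < v y

def extensionScores (k : ℕ) (b : C → ℕ) (a : C) : Set ℤ :=
  {s | ∃ v, IsLinearExtension b v ∧ s = approvalScore k v a}

lemma IsLinearExtensionWithTop.isLinearExtension {b : C → ℕ} {c : C}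
    {v : C ≃ Fin (Fintype.card C)} (hv : IsLinearExtensionWithTop b c v) :
    IsLinearExtension b v :=
  fun x y h => hv x y (Or.inl h)

section Position

variable {α : Type*} [Fintype α] {m : ℕ}

lemma card_filter_apply_lt (v : α ≃ Fin m) (x : α) : #{y | v y < v x} = v x := by
  rw [← Fin.card_Iio (v x), ← card_map v.toEmbedding]
  congr 1
  ext j
  simp

lemma val_apply_le_of_forall_lt_imp (v w : α ≃ Fin m) {x : α}
    (h : ∀ y, v y < v x → w y < w x) : (v x : ℕ) ≤ w x := by
  rw [← card_filter_apply_lt v, ← card_filter_apply_lt w]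
  exact card_le_card fun y hy => by simpa using h y (by simpa using hy)

lemma exists_equiv_fin_strictMono {β : Type*} [LinearOrder β] (f : α → β)
    (hf : Function.Injective f) :
    ∃ e : α ≃ Fin (Fintype.card α), ∀ a b, f a < f b → e a < e b := by
  let : LinearOrder α := LinearOrder.lift' f hf
  exact ⟨(monoEquivOfFin α rfl).symm.toEquiv, fun a b h =>
    (monoEquivOfFin α rfl).symm.lt_iff_lt.mpr h⟩

end Position

lemma approvalScore_anti {k : ℕ} {v w : C ≃ Fin (Fintype.card C)} {a : C}
    (h : (v a : ℕ) ≤ w a) : approvalScore k w a ≤ approvalScore k v a := by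
  unfold approvalScore
  split_ifs <;> omega

section MaxScore

variable {k : ℕ} {b : C → ℕ} {a : C} {m : ℤ}

lemma eq_zero_or_one_of_isGreatest_extensionScores
    (hm : IsGreatest (extensionScores k b a) m) : m = 0 ∨ m = 1 := by
  obtain ⟨v, -, rfl⟩ := hm.1
  unfold approvalScore
  split_ifs <;> simp

lemma approvalScore_le_of_isGreatest_extensionScores
    (hm : IsGreatest (extensionScores k b a) m) {v : C ≃ Fin (Fintype.card C)}
    (hv : IsLinearExtension b v) : approvalScore k v a ≤ m :=
  hm.2 ⟨v, hv, rfl⟩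

/-- Everything ranked above `a` in `v` is in a strictly better block, hence above `a` in
every linear extension. -/
lemma eq_approvalScore_of_isGreatest_extensionScores_of_top
    (hm : IsGreatest (extensionScores k b a) m) {v : C ≃ Fin (Fintype.card C)}
    (hv : IsLinearExtension b v) (htop : ∀ y, y ≠ a → ¬ b y < b a → v a < v y) :
    m = approvalScore k v a := by
  refine le_antisymm ?_ (approvalScore_le_of_isGreatest_extensionScores hm hv)
  obtain ⟨w, hw, rfl⟩ := hm.1
  refine approvalScore_anti (val_apply_le_of_forall_lt_imp v w fun y hy => hw y a ?_)
  by_contra hba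
  exact (htop y (by rintro rfl; exact hy.false) hba).asymm hy

lemma indicator_eq_sub_approvalScore (hm : IsGreatest (extensionScores k b a) m)
    {v : C ≃ Fin (Fintype.card C)} (hv : IsLinearExtension b v) :
    (if m = 1 ∧ approvalScore k v a = 0 then 1 else 0 : ℤ) = m - approvalScore k v a := by
  have hle := approvalScore_le_of_isGreatest_extensionScores hm hv
  unfold approvalScore at hle ⊢
  rcases eq_zero_or_one_of_isGreatest_extensionScores hm with rfl | rfl <;>
    split_ifs at hle ⊢ <;> omega

end MaxScore

lemma natCard_shortfall_eq_sum_sub {n k : ℕ} {B : Fin n → C → ℕ}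
    {smax : Fin n → C → ℤ} {V : Fin n → C ≃ Fin (Fintype.card C)}
    (hsmax : ∀ i a, IsGreatest (extensionScores k (B i) a) (smax i a))
    (hV : ∀ i, IsLinearExtension (B i) (V i)) (a : C) :
    (Nat.card {i // smax i a = 1 ∧ approvalScore k (V i) a = 0} : ℤ) =
      ∑ i, smax i a - ∑ i, approvalScore k (V i) a := by
  rw [Nat.card_eq_fintype_card, Fintype.card_subtype, ← sum_sub_distrib]
  push_cast [← sum_boole]
  exact sum_congr rfl fun i _ => indicator_eq_sub_approvalScore (hsmax i a) (hV i)

/-- Re-sort each block of `v` so that `c` comes first, keeping the order of the others. -/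
lemma exists_linearExtensionWithTop (c : C) {b : C → ℕ} {v : C ≃ Fin (Fintype.card C)}
    (hv : IsLinearExtension b v) :
    ∃ w, IsLinearExtensionWithTop b c w ∧ ∀ a, a ≠ c → (v a : ℕ) ≤ w a := by
  classical
  let key : C → ℕ ×ₗ ℕ ×ₗ Fin (Fintype.card C) :=
    fun a => toLex (b a, toLex (if a = c then 0 else 1, v a))
  have key_lt {x y} : key x < key y ↔ b x < b y ∨ b x = b y ∧
      ((if x = c then 0 else 1) < (if y = c then 0 else 1) ∨
        (if x = c then 0 else 1 : ℕ) = (if y = c then 0 else 1) ∧ v x < v y) := by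
    simp only [key, Prod.Lex.toLex_lt_toLex]
  obtain ⟨w, hw⟩ := exists_equiv_fin_strictMono key fun x y h => v.injective (by
    simpa [key] using congrArg (fun p => (ofLex (ofLex p).2).2) h)
  refine ⟨w, ?_, fun a hac => val_apply_le_of_forall_lt_imp v w fun y hy => hw y a ?_⟩
  · rintro x y (hxy | ⟨rfl, hyc, hyx⟩)
    · exact hw x y (key_lt.2 (.inl hxy))
    · refine hw _ y (key_lt.2 ?_)
      rcases (not_lt.1 hyx).lt_or_eq with hlt | heq
      · exact .inl hlt
      · exact .inr ⟨heq, .inl (by simp [hyc])⟩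
  · rcases (not_lt.1 fun h => (hv a y h).asymm hy).lt_or_eq with hlt | heq
    · exact key_lt.2 (.inl hlt)
    · by_cases hyc : y = c
      · exact key_lt.2 (.inr ⟨heq, .inl (by simp [hyc, hac])⟩)
      · exact key_lt.2 (.inr ⟨heq, .inr ⟨by simp [hyc, hac], hy⟩⟩)

end Voting

theorem stmt7_general {C : Type*} [Fintype C] (n k : ℕ)
    (B : Fin n → C → ℕ) (c : C) (smax : Fin n → C → ℤ)
    (hsmax : ∀ i (a : C), IsGreatest
      {s : ℤ | ∃ v : C ≃ Fin (Fintype.card C),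
        (∀ x y : C, B i x < B i y → v x < v y) ∧
        s = if (v a : ℕ) < k then 1 else 0} (smax i a)) :
    (∃ V : Fin n → (C ≃ Fin (Fintype.card C)),
        (∀ i (a b : C), B i a < B i b → V i a < V i b) ∧
        ∀ c' : C, (∑ i, if (V i c' : ℕ) < k then (1:ℤ) else 0)
            ≤ ∑ i, if (V i c : ℕ) < k then (1:ℤ) else 0) ↔
    (∃ V : Fin n → (C ≃ Fin (Fintype.card C)),
        (∀ i (a b : C), (B i a < B i b ∨ (a = c ∧ b ≠ c ∧ ¬ B i b < B i c)) →
          V i a < V i b) ∧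
        ∀ c' : C, c' ≠ c →
          (∑ i, smax i c') - (∑ i, smax i c) ≤
            (Nat.card {i : Fin n // smax i c' = 1 ∧
              (if (V i c' : ℕ) < k then (1:ℤ) else 0) = 0} : ℤ)) := by
  have hsmax' : ∀ i a, IsGreatest (extensionScores k (B i) a) (smax i a) := hsmax
  constructor
  · rintro ⟨V, hV, hwin⟩
    choose W hW hWV using fun i => exists_linearExtensionWithTop c (hV i)
    refine ⟨W, hW, fun c' hc' => ?_⟩
    have hc_le : ∑ i, approvalScore k (V i) c ≤ ∑ i, smax i c := sum_le_sum fun i _ =>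
      approvalScore_le_of_isGreatest_extensionScores (hsmax' i c) (hV i)
    have hc'_drop : ∑ i, approvalScore k (W i) c' ≤ ∑ i, approvalScore k (V i) c' :=
      sum_le_sum fun i _ => approvalScore_anti (hWV i c' hc')
    have hwin' : ∑ i, approvalScore k (V i) c' ≤ ∑ i, approvalScore k (V i) c := hwin c'
    have hW_ext i := (hW i).isLinearExtension
    calc ∑ i, smax i c' - ∑ i, smax i c
        ≤ ∑ i, smax i c' - ∑ i, approvalScore k (W i) c' := by linarith
      _ = _ := (natCard_shortfall_eq_sum_sub hsmax' hW_ext c').symm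
  · rintro ⟨V, hV, hshort⟩
    have hext i : IsLinearExtension (B i) (V i) :=
      IsLinearExtensionWithTop.isLinearExtension (c := c) (hV i)
    refine ⟨V, hext, fun c' => ?_⟩
    rcases eq_or_ne c' c with rfl | hc'
    · exact le_rfl
    have hc_eq : ∑ i, smax i c = ∑ i, approvalScore k (V i) c := sum_congr rfl fun i _ =>
      eq_approvalScore_of_isGreatest_extensionScores_of_top (hsmax' i c) (hext i)
        fun y hy hyc => hV i c y (.inr ⟨rfl, hy, hyc⟩)
    have hc'_short :
        ∑ i, smax i c' - ∑ i, smax i c ≤ ∑ i, smax i c' - ∑ i, approvalScore k (V i) c' :=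
      (hshort c' hc').trans_eq (natCard_shortfall_eq_sum_sub hsmax' hext c')
    change ∑ i, approvalScore k (V i) c' ≤ ∑ i, approvalScore k (V i) c
    linarith

/-- `k`-approval on a partitioned profile `O` (vote `i` given by block indices
`B i`), with `smax i a` the maximum score of `a` over linear extensions of vote
`i`. Candidate `c` is a possible co-winner iff there is a profile `V` of linear
extensions of `O^c` (c fixed atop its block in each vote, i.e. `c` additionally
precedes every candidate not forced above it) in which every `c' ≠ c` scores `0`
in at least `s^max(O,c') − s^max(O,c)` of the votes where `smax i c' = 1`. -/
theorem stmt7 {C : Type*} [Fintype C] [DecidableEq C] (n k : ℕ)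
    (B : Fin n → C → ℕ) (c : C) (smax : Fin n → C → ℤ)
    (hsmax : ∀ i (a : C), IsGreatest
      {s : ℤ | ∃ v : C ≃ Fin (Fintype.card C),
        (∀ x y : C, B i x < B i y → v x < v y) ∧
        s = if (v a : ℕ) < k then 1 else 0} (smax i a)) :
    (∃ V : Fin n → (C ≃ Fin (Fintype.card C)),
        (∀ i (a b : C), B i a < B i b → V i a < V i b) ∧
        ∀ c' : C, (∑ i, if (V i c' : ℕ) < k then (1:ℤ) else 0)
            ≤ ∑ i, if (V i c : ℕ) < k then (1:ℤ) else 0) ↔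
    (∃ V : Fin n → (C ≃ Fin (Fintype.card C)),
        (∀ i (a b : C), (B i a < B i b ∨ (a = c ∧ b ≠ c ∧ ¬ B i b < B i c)) →
          V i a < V i b) ∧
        ∀ c' : C, c' ≠ c →
          (∑ i, smax i c') - (∑ i, smax i c) ≤
            (Nat.card {i : Fin n // smax i c' = 1 ∧
              (if (V i c' : ℕ) < k then (1:ℤ) else 0) = 0} : ℤ)) :=
  stmt7_general n k B c smax hsmax
end

section
/- Under the scoring rule (2,1,...,1,0) on m ≥ 3 candidates, let o be a partitioned preference with at least two blocks, c' a candidate, and v a linear extension of o. Then s^max(o,c') − s(v,c') ∈ {0,1}; i.e., a candidate can lose at most one point relative to its maximum score in any single partitioned vote with at least two blocks. -/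
/-- Score of the 0-based position `p` (from the top) under the scoring vector
`(2,1,…,1,0)` of length `m`: top scores 2, bottom scores 0, rest score 1. -/
def sc210 (m p : ℕ) : ℤ := if p = 0 then 2 else if p = m - 1 then 0 else 1

/-- Under `(2,1,…,1,0)` with `m ≥ 3` candidates, for a partitioned preference
(block indices `blk`) with at least two blocks, a candidate `c'` loses at most
one point relative to its maximum score in any linear extension `v`. -/
theorem stmt9 {C : Type*} [Fintype C] (hm : 3 ≤ Fintype.card C)
    (blk : C → ℕ) (h2 : ∃ a b : C, blk a ≠ blk b) (c' : C) (smax : ℤ)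
    (hsmax : IsGreatest {s : ℤ | ∃ v : C ≃ Fin (Fintype.card C),
        (∀ x y : C, blk x < blk y → v x < v y) ∧
        s = sc210 (Fintype.card C) (v c' : ℕ)} smax)
    (v : C ≃ Fin (Fintype.card C)) (hv : ∀ x y : C, blk x < blk y → v x < v y) :
    smax - sc210 (Fintype.card C) (v c' : ℕ) ∈ ({0, 1} : Set ℤ) := by
  obtain ⟨⟨w, hw, hws⟩, hub⟩ := hsmax
  have hle : sc210 (Fintype.card C) ((v c' : ℕ)) ≤ smax := hub ⟨v, hv, rfl⟩
  have key : smax ≤ sc210 (Fintype.card C) ((v c' : ℕ)) + 1 := by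
    rw [hws]
    by_contra h
    push_neg at h
    simp only [sc210] at h
    split_ifs at h with ha hb hc hd he hf <;> try omega
    all_goals {
      have hctop : ∀ x : C, blk c' ≤ blk x := by
        intro x
        by_contra hx
        push_neg at hx
        have h1 := hw x c' hx
        rw [Fin.lt_def] at h1
        omega
      have hcbot : ∀ x : C, blk x ≤ blk c' := by
        intro x
        by_contra hx
        push_neg at hx
        have h1 := hv c' x hx
        rw [Fin.lt_def] at h1
        have h3 : ((v x : ℕ)) < Fintype.card C := (v x).isLt
        omega
      obtain ⟨a, b, hab⟩ := h2
      exact hab (le_antisymm (le_trans (hcbot a) (hctop b))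
        (le_trans (hcbot b) (hctop a)))
    }
  simp only [Set.mem_insert_iff, Set.mem_singleton_iff]
  omega
end
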